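/- arXiv:1908.07512 — 4 statements merged into one kernel-verified Lean document; each statement's English description precedes it below -/
import Mathlib

section
/- For an invertible symmetric matrix A and a unit vector u, the determinant of the compression P_u A P_u of A to the hyperplane {u}^⊥ equals det(A)·⟨u, A⁻¹u⟩. -/
open scoped RealInnerProductSpace

/-!
Extend a basis of the hyperplane `{u}ᗮ` by `u` in front. In this basis the compression is
the matrix of `A` with its first row and column deleted, i.e. the `(0, 0)` cofactor of `A`,
which equals `det A` times the `(0, 0)` entry of `A⁻¹`. Since the first coordinate functional
of the basis is `⟪u, ·⟫`, that entry is `⟪u, A⁻¹ u⟫`.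
-/

open Module

theorem Matrix.det_submatrix_succ_succ_eq_det_mul {R : Type*} [CommRing R] {n : ℕ}
    {M M' : Matrix (Fin (n + 1)) (Fin (n + 1)) R} (h : M' * M = 1) :
    (M.submatrix Fin.succ Fin.succ).det = M.det * M' 0 0 := by
  have hadj : M.adjugate = M.det • M' := by
    calc M.adjugate = M.adjugate * (M * M') := by rw [mul_eq_one_comm.mp h, Matrix.mul_one]
      _ = M.det • M' := by
        rw [← Matrix.mul_assoc, Matrix.adjugate_mul, Matrix.smul_mul, Matrix.one_mul]
  simpa [hadj] using (M.adjugate_fin_succ_eq_det_submatrix 0 0).symm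

section

variable {K E : Type*} [Field K] [AddCommGroup E] [Module K E]

namespace Module.Basis

noncomputable def finConsOfKer {n : ℕ} {f : E →ₗ[K] K} {y : E} (hy : f y = 1)
    {W : Submodule K E} (hW : LinearMap.ker f = W) (v : Basis (Fin n) K W) :
    Basis (Fin (n + 1)) K E :=
  .mkFinCons y v
    (fun c x hx hc => by
      have hfx : f x = 0 := by rwa [← hW] at hx
      simpa [hy, hfx] using congrArg f hc)
    (fun z => ⟨-f z, by rw [← hW, LinearMap.mem_ker]; simp [hy]⟩)

variable {n : ℕ} {f : E →ₗ[K] K} {y : E} (hy : f y = 1)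
    {W : Submodule K E} (hW : LinearMap.ker f = W) (v : Basis (Fin n) K W)

@[simp]
theorem finConsOfKer_zero : finConsOfKer hy hW v 0 = y := by
  simp [finConsOfKer]

@[simp]
theorem finConsOfKer_succ (i : Fin n) : finConsOfKer hy hW v i.succ = v i := by
  simp [finConsOfKer]

theorem finConsOfKer_repr_zero (x : E) : (finConsOfKer hy hW v).repr x 0 = f x := by
  have : (finConsOfKer hy hW v).coord 0 = f := by
    refine (finConsOfKer hy hW v).ext fun i => Fin.cases ?_ (fun j => ?_) i
    · rw [coord_apply, repr_self]
      simp [hy]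
    · have : f (v j) = 0 := by rw [← LinearMap.mem_ker, hW]; exact (v j).2
      rw [coord_apply, repr_self]
      simp [this]
  exact LinearMap.congr_fun this x

theorem finConsOfKer_repr_succ {p : E →ₗ[K] W} (hpy : p y = 0) (hpW : ∀ w : W, p w = w)
    (x : E) (i : Fin n) : (finConsOfKer hy hW v).repr x i.succ = v.repr (p x) i := by
  have : (finConsOfKer hy hW v).coord i.succ = v.coord i ∘ₗ p := by
    refine (finConsOfKer hy hW v).ext fun k => Fin.cases ?_ (fun j => ?_) k
    · rw [coord_apply, repr_self]
      simp [hpy]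
    · rw [coord_apply, repr_self]
      simp [hpW, Finsupp.single_apply]
  exact LinearMap.congr_fun this x

end Module.Basis

theorem LinearMap.toMatrix_compression_eq_submatrix {n : ℕ} {f : E →ₗ[K] K} {y : E}
    (hy : f y = 1) {W : Submodule K E} (hW : LinearMap.ker f = W) (v : Basis (Fin n) K W)
    {p : E →ₗ[K] W} (hpy : p y = 0) (hpW : ∀ w : W, p w = w) (A : E →ₗ[K] E) :
    LinearMap.toMatrix v v (p ∘ₗ A ∘ₗ W.subtype)
      = (LinearMap.toMatrix (v.finConsOfKer hy hW) (v.finConsOfKer hy hW) A).submatrix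
          Fin.succ Fin.succ := by
  ext i j
  simp [LinearMap.toMatrix_apply, Basis.finConsOfKer_repr_succ hy hW v hpy hpW]

theorem LinearMap.det_compression_eq_det_mul [FiniteDimensional K E] {f : E →ₗ[K] K} {y : E}
    (hy : f y = 1) {W : Submodule K E} (hW : LinearMap.ker f = W)
    {p : E →ₗ[K] W} (hpy : p y = 0) (hpW : ∀ w : W, p w = w)
    {A B : E →ₗ[K] E} (hBA : B ∘ₗ A = LinearMap.id) :
    LinearMap.det (p ∘ₗ A ∘ₗ W.subtype) = LinearMap.det A * f (B y) := by
  let v := Module.finBasis K W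
  let b := v.finConsOfKer hy hW
  have hinv : LinearMap.toMatrix b b B * LinearMap.toMatrix b b A = 1 := by
    rw [← LinearMap.toMatrix_comp, hBA, LinearMap.toMatrix_id]
  rw [← LinearMap.det_toMatrix v, LinearMap.toMatrix_compression_eq_submatrix hy hW v hpy hpW,
    Matrix.det_submatrix_succ_succ_eq_det_mul hinv, LinearMap.det_toMatrix,
    LinearMap.toMatrix_apply, Basis.finConsOfKer_zero, Basis.finConsOfKer_repr_zero]

end

theorem det_compression_eq_det_mul_inner_general
    {N : ℕ} (A B : EuclideanSpace ℝ (Fin N) →ₗ[ℝ] EuclideanSpace ℝ (Fin N))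
    (hBA : B ∘ₗ A = LinearMap.id)
    (u : EuclideanSpace ℝ (Fin N)) (hu : ‖u‖ = 1) :
    LinearMap.det
      ((Submodule.orthogonalProjectionOnto (ℝ ∙ u)ᗮ).toLinearMap ∘ₗ A ∘ₗ (ℝ ∙ u)ᗮ.subtype)
      = LinearMap.det A * ⟪u, B u⟫ := by
  have huu : ⟪u, u⟫ = 1 := by rw [real_inner_self_eq_norm_sq, hu, one_pow]
  have hker : LinearMap.ker (innerₛₗ ℝ u) = (ℝ ∙ u)ᗮ := by
    ext x
    rw [LinearMap.mem_ker, innerₛₗ_apply_apply,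
      Submodule.mem_orthogonal_singleton_iff_inner_right]
  exact LinearMap.det_compression_eq_det_mul (f := innerₛₗ ℝ u) huu hker
    (Submodule.orthogonalProjectionOnto_orthogonalComplement_singleton_eq_zero u)
    (Submodule.orthogonalProjectionOnto_mem_subspace_eq_self) hBA

/-- For an invertible symmetric matrix `A` and a unit vector `u`, the
determinant of the compression `P_u A P_u` of `A` to the hyperplane `{u}ᗮ` equals
`det A * ⟪u, A⁻¹ u⟫`. -/
theorem det_compression_eq_det_mul_inner
    {N : ℕ} (A B : EuclideanSpace ℝ (Fin N) →ₗ[ℝ] EuclideanSpace ℝ (Fin N))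
    (hsym : ∀ x y, ⟪A x, y⟫ = ⟪x, A y⟫)
    (hAB : A ∘ₗ B = LinearMap.id) (hBA : B ∘ₗ A = LinearMap.id)
    (u : EuclideanSpace ℝ (Fin N)) (hu : ‖u‖ = 1) :
    LinearMap.det
      ((Submodule.orthogonalProjectionOnto (ℝ ∙ u)ᗮ).toLinearMap ∘ₗ A ∘ₗ (ℝ ∙ u)ᗮ.subtype)
      = LinearMap.det A * ⟪u, B u⟫ :=
  det_compression_eq_det_mul_inner_general A B hBA u hu
end

section
/- Let H, v, L, J be as above with J(λ) = (1/2)[Nλ − ⟨(H−λ)⁻¹v,v⟩] defined for λ > μ_1 (the largest eigenvalue of H). Then sup over the sphere {⟨σ,σ⟩=N} of L(σ) equals inf over λ > μ_1 of J(λ); moreover if the infimum is attained at λ*, then σ_{λ*} = −(H−λ*)⁻¹v attains the supremum. -/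
/-!
For `λ > μ₁` and `⟪σ, σ⟫ = N`, the vector `d = σ + (H - λ)⁻¹ v` satisfies
`2 (J λ - L σ) = ⟪(λ - H) d, d⟫ ≥ (λ - μ₁) ‖d‖²`: this is weak duality, with equality at
`σ = -(H - λ)⁻¹ v` as soon as `‖(H - λ)⁻¹ v‖² = N`. Since `J' λ = (N - ‖(H - λ)⁻¹ v‖²) / 2`,
that happens at every minimiser of `J`.

For strong duality, `‖(H - λ)⁻¹ v‖²` is continuous and tends to `0` at infinity, so if it ever
reaches `N` it equals `N` somewhere. Otherwise it stays bounded as `λ ↓ μ₁`, which forces `v` to be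
orthogonal to a unit top eigenvector `e`; then `σ = t e - (H - λ)⁻¹ v` lies on the sphere for a
suitable `t` with `t² ≤ N`, and its duality gap is `t² (λ - μ₁) / 2 ≤ N (λ - μ₁) / 2 → 0`.
-/

open scoped RealInnerProductSpace

open Filter Set Topology

theorem csSup_image_eq_csInf_image {α β : Type*} {f : α → ℝ} {g : β → ℝ} {s : Set α}
    {t : Set β} (hle : ∀ x ∈ s, ∀ y ∈ t, f x ≤ g y)
    (happrox : ∀ ε > 0, ∃ x ∈ s, ∃ y ∈ t, g y ≤ f x + ε) :
    sSup (f '' s) = sInf (g '' t) := by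
  obtain ⟨x₀, hx₀, y₀, hy₀, -⟩ := happrox 1 one_pos
  have hA : BddAbove (f '' s) := ⟨g y₀, forall_mem_image.2 fun x hx => hle x hx y₀ hy₀⟩
  have hB : BddBelow (g '' t) := ⟨f x₀, forall_mem_image.2 fun y hy => hle x₀ hx₀ y hy⟩
  refine le_antisymm (csSup_le ⟨_, mem_image_of_mem f hx₀⟩ ?_)
    (le_of_forall_pos_le_add fun ε hε => ?_)
  · exact forall_mem_image.2 fun x hx =>
      le_csInf ⟨_, mem_image_of_mem g hy₀⟩ (forall_mem_image.2 fun y hy => hle x hx y hy)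
  · obtain ⟨x, hx, y, hy, hxy⟩ := happrox ε hε
    calc sInf (g '' t) ≤ g y := csInf_le hB (mem_image_of_mem g hy)
      _ ≤ f x + ε := hxy
      _ ≤ sSup (f '' s) + ε := by grw [le_csSup hA (mem_image_of_mem f hx)]

section

variable {E : Type*} [NormedAddCommGroup E] [InnerProductSpace ℝ E] {H : E →ₗ[ℝ] E}

theorem LinearMap.IsSymmetric.inner_map_self_le_of_spectrum_le [FiniteDimensional ℝ E]
    (hH : H.IsSymmetric) {μ₁ : ℝ} (hμ₁ : ∀ μ ∈ spectrum ℝ H, μ ≤ μ₁) (x : E) :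
    ⟪H x, x⟫ ≤ μ₁ * ⟪x, x⟫ := by
  let b := hH.eigenvectorBasis rfl
  rw [← b.sum_inner_mul_inner (H x) x, ← b.sum_inner_mul_inner x x, Finset.mul_sum]
  refine Finset.sum_le_sum fun i _ => ?_
  have hle : hH.eigenvalues rfl i ≤ μ₁ :=
    hμ₁ _ (Module.End.hasEigenvalue_iff_mem_spectrum.mp (hH.hasEigenvalue_eigenvalues rfl i))
  rw [hH, hH.apply_eigenvectorBasis, real_inner_smul_right, real_inner_comm (b i) x, mul_assoc]
  exact mul_le_mul_of_nonneg_right hle (mul_self_nonneg _)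

theorem exists_apply_eq_smul_norm_eq_one [FiniteDimensional ℝ E] {μ : ℝ}
    (hμ : μ ∈ spectrum ℝ H) : ∃ e : E, H e = μ • e ∧ ‖e‖ = 1 := by
  obtain ⟨x, hx, hx0⟩ :=
    (Module.End.hasEigenvalue_iff_mem_spectrum.mpr hμ).exists_hasEigenvector
  refine ⟨‖x‖⁻¹ • x, ?_, norm_smul_inv_norm hx0⟩
  rw [map_smul, Module.End.mem_eigenspace_iff.mp hx, smul_comm]

theorem LinearMap.IsSymmetric.of_comp_eq_id {r : E →ₗ[ℝ] E} (hH : H.IsSymmetric)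
    (hr : H ∘ₗ r = LinearMap.id) : r.IsSymmetric := fun x y => by
  simpa [← LinearMap.comp_apply, hr] using (hH (r x) (r y)).symm

def IsResolventOn (H : E →ₗ[ℝ] E) (R : ℝ → E →ₗ[ℝ] E) (s : Set ℝ) : Prop :=
  ∀ lam ∈ s, (H - lam • LinearMap.id) ∘ₗ R lam = LinearMap.id ∧
    R lam ∘ₗ (H - lam • LinearMap.id) = LinearMap.id

theorem map_apply_eq_add_smul {r : E →ₗ[ℝ] E} {lam : ℝ}
    (hr : (H - lam • LinearMap.id) ∘ₗ r = LinearMap.id) (x : E) : H (r x) = x + lam • r x := by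
  simpa [sub_eq_iff_eq_add] using LinearMap.congr_fun hr x

theorem apply_map_sub_smul {r : E →ₗ[ℝ] E} {lam : ℝ}
    (hr : r ∘ₗ (H - lam • LinearMap.id) = LinearMap.id) (x : E) : r (H x - lam • x) = x := by
  simpa using LinearMap.congr_fun hr x

theorem LinearMap.IsSymmetric.resolvent {r : E →ₗ[ℝ] E} {lam : ℝ} (hH : H.IsSymmetric)
    (hr : (H - lam • LinearMap.id) ∘ₗ r = LinearMap.id) : r.IsSymmetric :=
  (hH.sub (LinearMap.IsSymmetric.id.smul (conj_trivial lam))).of_comp_eq_id hr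

theorem mul_inner_self_le_inner_smul_sub {μ₁ : ℝ} (hμ : ∀ x, ⟪H x, x⟫ ≤ μ₁ * ⟪x, x⟫)
    (lam : ℝ) (d : E) : (lam - μ₁) * ⟪d, d⟫ ≤ ⟪lam • d - H d, d⟫ := by
  rw [inner_sub_left, real_inner_smul_left]
  linarith [hμ d]

theorem mul_norm_resolvent_le {μ₁ lam : ℝ} {r : E →ₗ[ℝ] E} (hμ : ∀ x, ⟪H x, x⟫ ≤ μ₁ * ⟪x, x⟫)
    (hr : (H - lam • LinearMap.id) ∘ₗ r = LinearMap.id) (y : E) :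
    (lam - μ₁) * ‖r y‖ ≤ ‖y‖ := by
  have hcoer := mul_inner_self_le_inner_smul_sub hμ lam (r y)
  rw [map_apply_eq_add_smul hr, sub_add_cancel_right, inner_neg_left,
    real_inner_self_eq_norm_sq] at hcoer
  have hcs := neg_le_of_abs_le (abs_real_inner_le_norm y (r y))
  rcases (norm_nonneg (r y)).eq_or_lt with h0 | hpos
  · rw [← h0, mul_zero]
    exact norm_nonneg y
  · exact le_of_mul_le_mul_right (by linarith) hpos

theorem resolvent_sub_resolvent {a b : ℝ} {ra rb : E →ₗ[ℝ] E}
    (ha : ra ∘ₗ (H - a • LinearMap.id) = LinearMap.id)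
    (hb : (H - b • LinearMap.id) ∘ₗ rb = LinearMap.id) (u : E) :
    ra u - rb u = (a - b) • ra (rb u) := by
  have hu : u = H (rb u) - a • rb u + (a - b) • rb u := by
    rw [map_apply_eq_add_smul hb u]
    module
  nth_rewrite 1 [hu]
  rw [map_add, apply_map_sub_smul ha, map_smul]
  abel

theorem continuousAt_resolvent_apply {R : ℝ → E →ₗ[ℝ] E} {μ₁ b : ℝ}
    (hμ : ∀ x, ⟪H x, x⟫ ≤ μ₁ * ⟪x, x⟫) (hR : IsResolventOn H R (Ioi μ₁)) (v : E)
    (hb : μ₁ < b) : ContinuousAt (fun lam => R lam v) b := by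
  have hbound : ∀ᶠ a in 𝓝 b, ‖R a v - R b v‖ ≤ |a - b| * ‖R b v‖ / (a - μ₁) := by
    filter_upwards [Ioi_mem_nhds hb] with a (ha : μ₁ < a)
    rw [resolvent_sub_resolvent (hR a ha).2 (hR b hb).1, norm_smul, Real.norm_eq_abs,
      mul_div_assoc]
    gcongr
    rw [le_div_iff₀ (sub_pos.2 ha), mul_comm]
    exact mul_norm_resolvent_le hμ (hR a ha).1 _
  have hlim : Tendsto (fun a => |a - b| * ‖R b v‖ / (a - μ₁)) (𝓝 b) (𝓝 0) := by
    have hcont : ContinuousAt (fun a => |a - b| * ‖R b v‖ / (a - μ₁)) b :=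
      ContinuousAt.div (by fun_prop) (by fun_prop) (sub_pos.2 hb).ne'
    simpa using hcont.tendsto
  exact tendsto_iff_norm_sub_tendsto_zero.2
    (squeeze_zero' (Eventually.of_forall fun _ => norm_nonneg _) hbound hlim)

theorem tendsto_resolvent_apply_atTop {R : ℝ → E →ₗ[ℝ] E} {μ₁ : ℝ}
    (hμ : ∀ x, ⟪H x, x⟫ ≤ μ₁ * ⟪x, x⟫) (hR : IsResolventOn H R (Ioi μ₁)) (v : E) :
    Tendsto (fun lam => R lam v) atTop (𝓝 0) := by
  have hbound : ∀ᶠ lam in atTop, ‖R lam v‖ ≤ ‖v‖ / (lam - μ₁) := by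
    filter_upwards [eventually_gt_atTop μ₁] with lam hl
    rw [le_div_iff₀ (sub_pos.2 hl), mul_comm]
    exact mul_norm_resolvent_le hμ (hR lam hl).1 v
  have hlim : Tendsto (fun lam => ‖v‖ / (lam - μ₁)) atTop (𝓝 0) :=
    tendsto_const_nhds.div_atTop (tendsto_atTop_add_const_right _ _ tendsto_id)
  exact tendsto_zero_iff_norm_tendsto_zero.2
    (squeeze_zero' (Eventually.of_forall fun _ => norm_nonneg _) hbound hlim)

theorem hasDerivAt_inner_resolvent_apply {R : ℝ → E →ₗ[ℝ] E} {μ₁ b : ℝ} (hH : H.IsSymmetric)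
    (hμ : ∀ x, ⟪H x, x⟫ ≤ μ₁ * ⟪x, x⟫) (hR : IsResolventOn H R (Ioi μ₁)) (v : E)
    (hb : μ₁ < b) : HasDerivAt (fun lam => ⟪R lam v, v⟫) ⟪R b v, R b v⟫ b := by
  rw [hasDerivAt_iff_tendsto_slope]
  have hslope : (fun a => ⟪R b v, R a v⟫) =ᶠ[𝓝[≠] b] slope (fun lam => ⟪R lam v, v⟫) b := by
    filter_upwards [nhdsWithin_le_nhds (Ioi_mem_nhds hb), self_mem_nhdsWithin]
      with a (ha : μ₁ < a) (hab : a ≠ b)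
    rw [slope_def_field, ← inner_sub_left, resolvent_sub_resolvent (hR a ha).2 (hR b hb).1,
      real_inner_smul_left, (hH.resolvent (hR a ha).1) _ v, real_inner_comm]
    field_simp [sub_ne_zero.2 hab]
  have hcont : ContinuousAt (fun a => ⟪R b v, R a v⟫) b :=
    continuousAt_const.inner (𝕜 := ℝ) (continuousAt_resolvent_apply hμ hR v hb)
  exact (hcont.tendsto.mono_left nhdsWithin_le_nhds).congr' hslope

noncomputable def quadraticObjective (H : E →ₗ[ℝ] E) (v σ : E) : ℝ := (1 / 2) * ⟪H σ, σ⟫ + ⟪σ, v⟫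

noncomputable def lagrangeDual (c : ℝ) (R : ℝ → E →ₗ[ℝ] E) (v : E) (lam : ℝ) : ℝ :=
  (1 / 2) * (c * lam - ⟪R lam v, v⟫)

theorem two_mul_lagrangeDual_sub_quadraticObjective {R : ℝ → E →ₗ[ℝ] E} {lam c : ℝ} {v σ : E}
    (hH : H.IsSymmetric) (hr : (H - lam • LinearMap.id) ∘ₗ R lam = LinearMap.id)
    (hσ : ⟪σ, σ⟫ = c) :
    2 * (lagrangeDual c R v lam - quadraticObjective H v σ) =
      ⟪lam • (σ + R lam v) - H (σ + R lam v), σ + R lam v⟫ := by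
  have hHr := map_apply_eq_add_smul hr v
  have hσr : ⟪H σ, R lam v⟫ = ⟪σ, v⟫ + lam * ⟪σ, R lam v⟫ := by
    rw [hH, hHr, inner_add_right, real_inner_smul_right]
  simp only [lagrangeDual, quadraticObjective, map_add, hHr, inner_sub_left, inner_add_left,
    inner_add_right, real_inner_smul_left]
  linear_combination -lam * hσ + hσr - real_inner_comm v σ - real_inner_comm v (R lam v)

theorem quadraticObjective_le_lagrangeDual {R : ℝ → E →ₗ[ℝ] E} {μ₁ lam c : ℝ} {v σ : E}
    (hH : H.IsSymmetric) (hμ : ∀ x, ⟪H x, x⟫ ≤ μ₁ * ⟪x, x⟫)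
    (hr : (H - lam • LinearMap.id) ∘ₗ R lam = LinearMap.id) (hl : μ₁ ≤ lam) (hσ : ⟪σ, σ⟫ = c) :
    quadraticObjective H v σ ≤ lagrangeDual c R v lam := by
  have hgap := two_mul_lagrangeDual_sub_quadraticObjective (v := v) hH hr hσ
  have hcoer := mul_inner_self_le_inner_smul_sub hμ lam (σ + R lam v)
  nlinarith [real_inner_self_nonneg (x := σ + R lam v)]

theorem quadraticObjective_neg_eq_lagrangeDual {R : ℝ → E →ₗ[ℝ] E} {lam c : ℝ} {v : E}
    (hH : H.IsSymmetric) (hr : (H - lam • LinearMap.id) ∘ₗ R lam = LinearMap.id)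
    (hc : ⟪R lam v, R lam v⟫ = c) :
    quadraticObjective H v (-R lam v) = lagrangeDual c R v lam := by
  have hgap :=
    two_mul_lagrangeDual_sub_quadraticObjective (v := v) hH hr ((inner_neg_neg _ _).trans hc)
  rw [neg_add_cancel, inner_zero_right] at hgap
  linarith

theorem exists_inner_resolvent_apply_self_eq {R : ℝ → E →ₗ[ℝ] E} {μ₁ lam₀ c : ℝ} {v : E}
    (hμ : ∀ x, ⟪H x, x⟫ ≤ μ₁ * ⟪x, x⟫) (hR : IsResolventOn H R (Ioi μ₁)) (hc : 0 < c)
    (hl₀ : μ₁ < lam₀) (hle : c ≤ ⟪R lam₀ v, R lam₀ v⟫) :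
    ∃ lam, μ₁ < lam ∧ ⟪R lam v, R lam v⟫ = c := by
  have hlim : Tendsto (fun lam => ⟪R lam v, R lam v⟫) atTop (𝓝 0) := by
    have h := tendsto_resolvent_apply_atTop hμ hR v
    simpa using h.inner (𝕜 := ℝ) h
  obtain ⟨Λ, hΛ₀, hΛ⟩ := ((eventually_ge_atTop lam₀).and (hlim.eventually (ge_mem_nhds hc))).exists
  have hcont : ContinuousOn (fun lam => ⟪R lam v, R lam v⟫) (Icc lam₀ Λ) := fun lam hlam =>
    have h := continuousAt_resolvent_apply hμ hR v (hl₀.trans_le hlam.1)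
    (h.inner (𝕜 := ℝ) h).continuousWithinAt
  obtain ⟨lam, hlam, heq⟩ := intermediate_value_Icc' hΛ₀ hcont ⟨hΛ, hle⟩
  exact ⟨lam, hl₀.trans_le hlam.1, heq⟩

theorem inner_resolvent_apply_eigenvector {r : E →ₗ[ℝ] E} {lam μ : ℝ} {v e : E}
    (hH : H.IsSymmetric) (hr : (H - lam • LinearMap.id) ∘ₗ r = LinearMap.id)
    (hr' : r ∘ₗ (H - lam • LinearMap.id) = LinearMap.id) (he : H e = μ • e) (hμ : μ ≠ lam) :
    ⟪r v, e⟫ = (μ - lam)⁻¹ * ⟪v, e⟫ := by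
  have hre : r e = (μ - lam)⁻¹ • e := by
    have h := apply_map_sub_smul hr' e
    rw [he, ← sub_smul, map_smul] at h
    exact (eq_inv_smul_iff₀ (sub_ne_zero.2 hμ)).2 h
  rw [hH.resolvent hr, hre, real_inner_smul_right]

theorem inner_eq_zero_of_forall_inner_resolvent_apply_self_lt {R : ℝ → E →ₗ[ℝ] E} {μ₁ c : ℝ}
    {v e : E} (hH : H.IsSymmetric) (hR : IsResolventOn H R (Ioi μ₁)) (he : H e = μ₁ • e)
    (he1 : ‖e‖ = 1) (hlt : ∀ lam, μ₁ < lam → ⟪R lam v, R lam v⟫ < c) : ⟪v, e⟫ = 0 := by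
  have hbound : ∀ lam, μ₁ < lam → ⟪v, e⟫ ^ 2 ≤ c * (lam - μ₁) ^ 2 := by
    intro lam hl
    have hve : ⟪v, e⟫ = (μ₁ - lam) * ⟪R lam v, e⟫ := by
      rw [inner_resolvent_apply_eigenvector hH (hR lam hl).1 (hR lam hl).2 he hl.ne,
        mul_inv_cancel_left₀ (sub_ne_zero.2 hl.ne)]
    have hcs := real_inner_mul_inner_self_le (R lam v) e
    rw [real_inner_self_eq_norm_sq e, he1, one_pow, mul_one] at hcs
    rw [hve, mul_pow, ← neg_sub lam, neg_sq, mul_comm c, sq ⟪R lam v, e⟫]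
    exact mul_le_mul_of_nonneg_left (hcs.trans (hlt lam hl).le) (sq_nonneg _)
  have hlim : Tendsto (fun lam => c * (lam - μ₁) ^ 2) (𝓝[>] μ₁) (𝓝 0) := by
    have h : Continuous (fun lam => c * (lam - μ₁) ^ 2) := by fun_prop
    simpa using h.continuousWithinAt.tendsto (s := Ioi μ₁) (x := μ₁)
  have hle := ge_of_tendsto hlim (eventually_nhdsWithin_of_forall hbound)
  exact pow_eq_zero_iff two_ne_zero |>.1 (le_antisymm hle (sq_nonneg _))

theorem exists_lagrangeDual_le_quadraticObjective_add {R : ℝ → E →ₗ[ℝ] E} {μ₁ lam c : ℝ}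
    {v e : E} (hH : H.IsSymmetric) (hr : (H - lam • LinearMap.id) ∘ₗ R lam = LinearMap.id)
    (hl : μ₁ ≤ lam) (he : H e = μ₁ • e) (he1 : ‖e‖ = 1) (horth : ⟪R lam v, e⟫ = 0)
    (hle : ⟪R lam v, R lam v⟫ ≤ c) :
    ∃ σ, ⟪σ, σ⟫ = c ∧ lagrangeDual c R v lam ≤ quadraticObjective H v σ + c / 2 * (lam - μ₁) := by
  have hee : ⟪e, e⟫ = 1 := by rw [real_inner_self_eq_norm_sq, he1, one_pow]
  set t := √(c - ⟪R lam v, R lam v⟫)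
  have ht : t ^ 2 = c - ⟪R lam v, R lam v⟫ := Real.sq_sqrt (sub_nonneg.2 hle)
  have hσ : ⟪t • e - R lam v, t • e - R lam v⟫ = c := by
    simp only [inner_sub_left, inner_sub_right, real_inner_smul_left, real_inner_smul_right,
      real_inner_comm (R lam v) e, horth, hee]
    linear_combination ht
  have hgap := two_mul_lagrangeDual_sub_quadraticObjective (v := v) hH hr hσ
  have hcomp : ⟪lam • t • e - H (t • e), t • e⟫ = t ^ 2 * (lam - μ₁) := by
    simp only [map_smul, he, inner_sub_left, real_inner_smul_left, real_inner_smul_right, hee]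
    ring
  rw [sub_add_cancel, hcomp] at hgap
  have htc : t ^ 2 ≤ c := by
    rw [ht]
    linarith [real_inner_self_nonneg (x := R lam v)]
  refine ⟨_, hσ, ?_⟩
  linarith [mul_le_mul_of_nonneg_right htc (sub_nonneg.2 hl)]

theorem exists_lagrangeDual_le_quadraticObjective_add_of_pos {R : ℝ → E →ₗ[ℝ] E}
    {μ₁ c ε : ℝ} {v e : E} (hH : H.IsSymmetric) (hμ : ∀ x, ⟪H x, x⟫ ≤ μ₁ * ⟪x, x⟫)
    (hR : IsResolventOn H R (Ioi μ₁)) (he : H e = μ₁ • e) (he1 : ‖e‖ = 1) (hc : 0 < c)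
    (hε : 0 < ε) :
    ∃ σ, ⟪σ, σ⟫ = c ∧ ∃ lam, μ₁ < lam ∧
      lagrangeDual c R v lam ≤ quadraticObjective H v σ + ε := by
  by_cases hreach : ∃ lam₀, μ₁ < lam₀ ∧ c ≤ ⟪R lam₀ v, R lam₀ v⟫
  · obtain ⟨lam₀, hl₀, hle⟩ := hreach
    obtain ⟨lam, hl, hlam⟩ := exists_inner_resolvent_apply_self_eq hμ hR hc hl₀ hle
    refine ⟨-R lam v, (inner_neg_neg _ _).trans hlam, lam, hl, ?_⟩
    rw [quadraticObjective_neg_eq_lagrangeDual hH (hR lam hl).1 hlam]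
    linarith
  · push Not at hreach
    have hve := inner_eq_zero_of_forall_inner_resolvent_apply_self_lt hH hR he he1 hreach
    have hl : μ₁ < μ₁ + ε / c := lt_add_of_pos_right _ (div_pos hε hc)
    have horth : ⟪R (μ₁ + ε / c) v, e⟫ = 0 := by
      rw [inner_resolvent_apply_eigenvector hH (hR _ hl).1 (hR _ hl).2 he hl.ne, hve, mul_zero]
    obtain ⟨σ, hσ, hgap⟩ := exists_lagrangeDual_le_quadraticObjective_add hH (hR _ hl).1 hl.le he
      he1 horth (hreach _ hl).le
    refine ⟨σ, hσ, _, hl, hgap.trans ?_⟩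
    field_simp
    linarith

theorem inner_resolvent_apply_self_eq_of_isMinOn {R : ℝ → E →ₗ[ℝ] E} {μ₁ lam c : ℝ} {v : E}
    (hH : H.IsSymmetric) (hμ : ∀ x, ⟪H x, x⟫ ≤ μ₁ * ⟪x, x⟫) (hR : IsResolventOn H R (Ioi μ₁))
    (hl : μ₁ < lam) (hmin : IsMinOn (lagrangeDual c R v) (Ioi μ₁) lam) :
    ⟪R lam v, R lam v⟫ = c := by
  have hderiv : HasDerivAt (lagrangeDual c R v) ((1 / 2) * (c * 1 - ⟪R lam v, R lam v⟫)) lam :=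
    (((hasDerivAt_id lam).const_mul c).sub
      (hasDerivAt_inner_resolvent_apply hH hμ hR v hl)).const_mul (1 / 2)
  have hzero := (hmin.isLocalMin (Ioi_mem_nhds hl)).hasDerivAt_eq_zero hderiv
  linarith

end

theorem lagrange_duality_sphere_general
    {N : ℕ} (hN : 0 < N)
    (H : EuclideanSpace ℝ (Fin N) →ₗ[ℝ] EuclideanSpace ℝ (Fin N))
    (hsym : ∀ x y, ⟪H x, y⟫ = ⟪x, H y⟫)
    (v : EuclideanSpace ℝ (Fin N))
    (μ₁ : ℝ) (hμ₁mem : μ₁ ∈ spectrum ℝ H) (hμ₁ : ∀ μ ∈ spectrum ℝ H, μ ≤ μ₁)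
    (R : ℝ → (EuclideanSpace ℝ (Fin N) →ₗ[ℝ] EuclideanSpace ℝ (Fin N)))
    (hR : ∀ lam, μ₁ < lam →
      (H - lam • LinearMap.id) ∘ₗ R lam = LinearMap.id ∧
      R lam ∘ₗ (H - lam • LinearMap.id) = LinearMap.id)
    (L J : _) 
    (hL : L = fun σ : EuclideanSpace ℝ (Fin N) => (1 / 2) * ⟪H σ, σ⟫ + ⟪σ, v⟫)
    (hJ : J = fun lam : ℝ => (1 / 2) * ((N : ℝ) * lam - ⟪R lam v, v⟫)) :
    sSup (L '' {σ | ⟪σ, σ⟫ = (N : ℝ)}) = sInf (J '' Set.Ioi μ₁) ∧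
    ∀ lam', μ₁ < lam' → (∀ lam, μ₁ < lam → J lam' ≤ J lam) →
      ⟪(-(R lam' v) : EuclideanSpace ℝ (Fin N)), -(R lam' v)⟫ = (N : ℝ) ∧
      ∀ σ : EuclideanSpace ℝ (Fin N), ⟪σ, σ⟫ = (N : ℝ) → L σ ≤ L (-(R lam' v)) := by
  obtain rfl : L = quadraticObjective H v := hL
  obtain rfl : J = lagrangeDual N R v := hJ
  have hH : H.IsSymmetric := hsym
  have hR : IsResolventOn H R (Ioi μ₁) := hR
  have hμ := hH.inner_map_self_le_of_spectrum_le hμ₁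
  obtain ⟨e, he, he1⟩ := exists_apply_eq_smul_norm_eq_one hμ₁mem
  have hweak : ∀ σ ∈ {σ | ⟪σ, σ⟫ = (N : ℝ)}, ∀ lam ∈ Ioi μ₁,
      quadraticObjective H v σ ≤ lagrangeDual N R v lam := fun σ hσ lam hl =>
    quadraticObjective_le_lagrangeDual hH hμ (hR lam hl).1 hl.le hσ
  refine ⟨csSup_image_eq_csInf_image hweak fun ε hε =>
    exists_lagrangeDual_le_quadraticObjective_add_of_pos hH hμ hR he he1 (Nat.cast_pos.2 hN) hε,
    fun lam' hl' hmin => ?_⟩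
  have hnorm := inner_resolvent_apply_self_eq_of_isMinOn hH hμ hR hl' (isMinOn_iff.2 hmin)
  refine ⟨(inner_neg_neg _ _).trans hnorm, fun σ hσ => ?_⟩
  rw [quadraticObjective_neg_eq_lagrangeDual hH (hR lam' hl').1 hnorm]
  exact hweak σ hσ lam' hl'

/-- Lagrange duality: `sup_{⟪σ,σ⟫ = N} L(σ) = inf_{lam > μ₁} J(lam)` where
`L(σ) = (1/2)⟪Hσ,σ⟫ + ⟪σ,v⟫`, `J(lam) = (1/2)(N·lam - ⟪(H-lam)⁻¹v, v⟫)`, and `μ₁` is the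
largest eigenvalue of `H`. Moreover, if the infimum is attained at `lam*`, then
`σ_{lam*} = -(H - lam*)⁻¹ v` attains the supremum. -/
theorem lagrange_duality_sphere
    {N : ℕ} (hN : 0 < N)
    (H : EuclideanSpace ℝ (Fin N) →ₗ[ℝ] EuclideanSpace ℝ (Fin N))
    (hsym : ∀ x y, ⟪H x, y⟫ = ⟪x, H y⟫)
    (hsimple : ∀ μ ∈ spectrum ℝ H, ∀ x y : EuclideanSpace ℝ (Fin N),
        H x = μ • x → H y = μ • y → ∃ t : ℝ, x = t • y ∨ y = t • x)
    (v : EuclideanSpace ℝ (Fin N)) (hv0 : v ≠ 0)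
    (hv : ∀ μ : ℝ, H v ≠ μ • v)
    (μ₁ : ℝ) (hμ₁mem : μ₁ ∈ spectrum ℝ H) (hμ₁ : ∀ μ ∈ spectrum ℝ H, μ ≤ μ₁)
    (R : ℝ → (EuclideanSpace ℝ (Fin N) →ₗ[ℝ] EuclideanSpace ℝ (Fin N)))
    (hR : ∀ lam, μ₁ < lam →
      (H - lam • LinearMap.id) ∘ₗ R lam = LinearMap.id ∧
      R lam ∘ₗ (H - lam • LinearMap.id) = LinearMap.id)
    (L J : _) 
    (hL : L = fun σ : EuclideanSpace ℝ (Fin N) => (1 / 2) * ⟪H σ, σ⟫ + ⟪σ, v⟫)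
    (hJ : J = fun lam : ℝ => (1 / 2) * ((N : ℝ) * lam - ⟪R lam v, v⟫)) :
    sSup (L '' {σ | ⟪σ, σ⟫ = (N : ℝ)}) = sInf (J '' Set.Ioi μ₁) ∧
    ∀ lam', μ₁ < lam' → (∀ lam, μ₁ < lam → J lam' ≤ J lam) →
      ⟪(-(R lam' v) : EuclideanSpace ℝ (Fin N)), -(R lam' v)⟫ = (N : ℝ) ∧
      ∀ σ : EuclideanSpace ℝ (Fin N), ⟪σ, σ⟫ = (N : ℝ) → L σ ≤ L (-(R lam' v)) :=
  lagrange_duality_sphere_general hN H hsym v μ₁ hμ₁mem hμ₁ R hR L J hL hJ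
end

section
/- Let F_N : (a,b) → ℝ be a sequence of convex functions on an open interval, each tending to +∞ at both endpoints, converging pointwise to a convex function F with the same properties, and let x* be the unique minimizer of F. Let c_N → c with c > F(x*). Then for each sign s ∈ {+,−} there is a unique y^s with F(y^s)=c and sign of F at y^s matching s (i.e. y^− < x* < y^+), and for N large there are unique points y_N^s with F_N(y_N^s)=c_N on the corresponding side of the minimizer of F_N, and y_N^s → y^s. -/
/-!
Left of a point `m` with `g m < c`, a convex function `g` crosses the level `c` at most once,
lying above `c` before the crossing and below `c` after it. So the crossing point of `F_N` is
trapped between fixed points `p < y⁻ < q` as soon as `F_N p > c_N` and `F_N q < c_N`, which holds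
for large `N` by pointwise convergence at `p` and `q`. The crossings exist by the intermediate value
theorem between `x*` and a point where `F > c`, supplied by the blow-up of `F` at the endpoints.
The right branch is the left branch of `x ↦ g (-x)`.
-/

open Filter Set Topology

section LevelPoint

variable {s : Set ℝ} {g : ℝ → ℝ} {c m y z : ℝ}

theorem ConvexOn.comp_neg (hg : ConvexOn ℝ s g) : ConvexOn ℝ (-s) (fun x => g (-x)) :=
  hg.comp_linearMap (-LinearMap.id)

theorem ConvexOn.lt_apply_of_lt_of_apply_eq (hg : ConvexOn ℝ s g) (hz : z ∈ s) (hm : m ∈ s)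
    (hzy : z < y) (hym : y < m) (hgm : g m < c) (hgy : g y = c) : c < g z := by
  subst hgy
  refine hg.lt_left_of_right_lt hz hm ?_ hgm
  rw [openSegment_eq_Ioo (hzy.trans hym)]
  exact ⟨hzy, hym⟩

theorem ConvexOn.apply_lt_of_lt_of_apply_eq (hg : ConvexOn ℝ s g) (hy : y ∈ s) (hm : m ∈ s)
    (hyz : y < z) (hzm : z < m) (hgm : g m < c) (hgy : g y = c) : g z < c := by
  by_contra! hcz
  have hzy : g z < g y := hg.lt_left_of_right_lt hy hm
    (by rw [openSegment_eq_Ioo (hyz.trans hzm)]; exact ⟨hyz, hzm⟩) (hgm.trans_le hcz)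
  linarith

theorem ConvexOn.lt_apply_iff_of_apply_eq (hg : ConvexOn ℝ s g) (hy : y ∈ s) (hz : z ∈ s)
    (hm : m ∈ s) (hym : y < m) (hzm : z < m) (hgm : g m < c) (hgy : g y = c) :
    c < g z ↔ z < y := by
  refine ⟨fun hcz => lt_of_not_ge fun hyz => ?_,
    fun hzy => hg.lt_apply_of_lt_of_apply_eq hz hm hzy hym hgm hgy⟩
  rcases hyz.eq_or_lt with rfl | hyz
  · exact hcz.ne' hgy
  · exact (hg.apply_lt_of_lt_of_apply_eq hy hm hyz hzm hgm hgy).not_gt hcz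

theorem ConvexOn.apply_lt_iff_of_apply_eq (hg : ConvexOn ℝ s g) (hy : y ∈ s) (hz : z ∈ s)
    (hm : m ∈ s) (hym : y < m) (hzm : z < m) (hgm : g m < c) (hgy : g y = c) :
    g z < c ↔ y < z := by
  refine ⟨fun hzc => lt_of_not_ge fun hzy => ?_,
    fun hyz => hg.apply_lt_of_lt_of_apply_eq hy hm hyz hzm hgm hgy⟩
  rcases hzy.eq_or_lt with rfl | hzy
  · exact hzc.ne hgy
  · exact (hg.lt_apply_of_lt_of_apply_eq hz hm hzy hym hgm hgy).not_gt hzc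

theorem ConvexOn.eq_of_apply_eq_of_le (hg : ConvexOn ℝ s g) (hy : y ∈ s) (hz : z ∈ s)
    (hm : m ∈ s) (hym : y < m) (hzm : z ≤ m) (hgm : g m < c) (hgy : g y = c) (hgz : g z = c) :
    z = y := by
  rcases hzm.eq_or_lt with rfl | hzm
  · exact absurd hgz hgm.ne
  · exact le_antisymm
      (not_lt.1 fun hyz => ((hg.apply_lt_iff_of_apply_eq hy hz hm hym hzm hgm hgy).2 hyz).ne hgz)
      (not_lt.1 fun hzy => ((hg.lt_apply_iff_of_apply_eq hy hz hm hym hzm hgm hgy).2 hzy).ne' hgz)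

theorem ConvexOn.exists_apply_eq_of_lt (hs : IsOpen s) (hg : ConvexOn ℝ s g) {p : ℝ} (hp : p ∈ s)
    (hm : m ∈ s) (hpm : p < m) (hgm : g m < c) (hcp : c < g p) :
    ∃ y ∈ Ioo p m, g y = c ∧ ∀ z ∈ s, z ≤ m → g z = c → z = y := by
  have hIcc : Icc p m ⊆ s := hg.1.ordConnected.out hp hm
  obtain ⟨y, hy, hgy⟩ :=
    intermediate_value_Ioo' hpm.le ((hg.continuousOn hs).mono hIcc) ⟨hgm, hcp⟩
  exact ⟨y, hy, hgy, fun z hz hzm hgz =>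
    hg.eq_of_apply_eq_of_le (hIcc (Ioo_subset_Icc_self hy)) hz hm hy.2 hzm hgm hgy hgz⟩

end LevelPoint

section Convergence

variable {ι : Type*} {l : Filter ι} {s : Set ℝ} {g : ℝ → ℝ} {gN : ι → ℝ → ℝ} {cN : ι → ℝ}
  {c m p q : ℝ}

theorem tendsto_of_apply_eq_of_lt (hg : ConvexOn ℝ s g) (hgN : ∀ i, ConvexOn ℝ s (gN i))
    (hlim : ∀ x ∈ s, Tendsto (fun i => gN i x) l (𝓝 (g x))) (hcN : Tendsto cN l (𝓝 c))
    (hp : p ∈ s) (hm : m ∈ s) (hgm : g m < c) {y : ℝ} (hy : y ∈ Ioo p m) (hgy : g y = c)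
    {u : ι → ℝ} (hu : ∀ᶠ i in l, u i ∈ s ∧ u i < m ∧ gN i (u i) = cN i) :
    Tendsto u l (𝓝 y) := by
  have hys : y ∈ s := hg.1.ordConnected.out hp hm (Ioo_subset_Icc_self hy)
  have hgNm : ∀ᶠ i in l, gN i m < cN i := (hlim m hm).eventually_lt hcN hgm
  refine tendsto_order.2 ⟨fun a hay => ?_, fun b hyb => ?_⟩
  · set z := max a ((p + y) / 2)
    have hzy : z < y := max_lt hay (by linarith [hy.1])
    have hpz : p ≤ z := le_max_of_le_right (by linarith [hy.1])
    have hzs : z ∈ s := hg.1.ordConnected.out hp hys ⟨hpz, hzy.le⟩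
    have hcz : c < g z := hg.lt_apply_of_lt_of_apply_eq hzs hm hzy hy.2 hgm hgy
    filter_upwards [hcN.eventually_lt (hlim z hzs) hcz, hgNm, hu] with i hcNz hgNm ⟨hus, hum, hgNu⟩
    exact (le_max_left _ _).trans_lt
      (((hgN i).lt_apply_iff_of_apply_eq hus hzs hm hum (hzy.trans hy.2) hgNm hgNu).1 hcNz)
  · set z := min b ((y + m) / 2)
    have hyz : y < z := lt_min hyb (by linarith [hy.2])
    have hzm : z < m := (min_le_right _ _).trans_lt (by linarith [hy.2])
    have hzs : z ∈ s := hg.1.ordConnected.out hys hm ⟨hyz.le, hzm.le⟩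
    have hzc : g z < c := hg.apply_lt_of_lt_of_apply_eq hys hm hyz hzm hgm hgy
    filter_upwards [(hlim z hzs).eventually_lt hcN hzc, hgNm, hu] with i hzcN hgNm ⟨hus, hum, hgNu⟩
    exact (((hgN i).apply_lt_iff_of_apply_eq hus hzs hm hum hzm hgNm hgNu).1 hzcN).trans_le
      (min_le_left _ _)

theorem exists_tendsto_apply_eq_of_lt (hs : IsOpen s) (hg : ConvexOn ℝ s g)
    (hgN : ∀ i, ConvexOn ℝ s (gN i)) (hlim : ∀ x ∈ s, Tendsto (fun i => gN i x) l (𝓝 (g x)))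
    (hcN : Tendsto cN l (𝓝 c)) (hp : p ∈ s) (hm : m ∈ s) (hpm : p < m) (hgm : g m < c)
    (hcp : c < g p) :
    ∃ y ∈ Ioo p m, g y = c ∧ (∀ z ∈ s, z ≤ m → g z = c → z = y) ∧
      ∃ u : ι → ℝ, Tendsto u l (𝓝 y) ∧ ∀ᶠ i in l,
        u i ∈ Ioo p m ∧ gN i (u i) = cN i ∧ ∀ z ∈ s, z ≤ m → gN i z = cN i → z = u i := by
  obtain ⟨y, hy, hgy, hy_unique⟩ := hg.exists_apply_eq_of_lt hs hp hm hpm hgm hcp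
  have hsol : ∀ i, ∃ u, gN i m < cN i ∧ cN i < gN i p →
      u ∈ Ioo p m ∧ gN i u = cN i ∧ ∀ z ∈ s, z ≤ m → gN i z = cN i → z = u := fun i => by
    by_cases h : gN i m < cN i ∧ cN i < gN i p
    · obtain ⟨u, hu⟩ := (hgN i).exists_apply_eq_of_lt hs hp hm hpm h.1 h.2
      exact ⟨u, fun _ => hu⟩
    · exact ⟨0, fun h' => absurd h' h⟩
  choose u hu using hsol
  have hu_ev : ∀ᶠ i in l, u i ∈ Ioo p m ∧ gN i (u i) = cN i ∧
      ∀ z ∈ s, z ≤ m → gN i z = cN i → z = u i := by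
    filter_upwards [(hlim m hm).eventually_lt hcN hgm, hcN.eventually_lt (hlim p hp) hcp]
      with i hm' hp' using hu i ⟨hm', hp'⟩
  refine ⟨y, hy, hgy, hy_unique, u,
    tendsto_of_apply_eq_of_lt hg hgN hlim hcN hp hm hgm hy hgy ?_, hu_ev⟩
  filter_upwards [hu_ev] with i ⟨hui, hgNu, _⟩
  exact ⟨hg.1.ordConnected.out hp hm (Ioo_subset_Icc_self hui), hui.2, hgNu⟩

theorem exists_tendsto_apply_eq_of_gt (hs : IsOpen s) (hg : ConvexOn ℝ s g)
    (hgN : ∀ i, ConvexOn ℝ s (gN i)) (hlim : ∀ x ∈ s, Tendsto (fun i => gN i x) l (𝓝 (g x)))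
    (hcN : Tendsto cN l (𝓝 c)) (hq : q ∈ s) (hm : m ∈ s) (hmq : m < q) (hgm : g m < c)
    (hcq : c < g q) :
    ∃ y ∈ Ioo m q, g y = c ∧ (∀ z ∈ s, m ≤ z → g z = c → z = y) ∧
      ∃ v : ι → ℝ, Tendsto v l (𝓝 y) ∧ ∀ᶠ i in l,
        v i ∈ Ioo m q ∧ gN i (v i) = cN i ∧ ∀ z ∈ s, m ≤ z → gN i z = cN i → z = v i := by
  obtain ⟨y, hy, hgy, hy_unique, u, hu, hu_ev⟩ :=
    exists_tendsto_apply_eq_of_lt (g := fun x => g (-x)) (gN := fun i x => gN i (-x)) hs.neg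
      hg.comp_neg (fun i => (hgN i).comp_neg) (fun x hx => hlim (-x) hx) hcN (neg_mem_neg.2 hq)
      (neg_mem_neg.2 hm) (neg_lt_neg hmq) (by simpa using hgm) (by simpa using hcq)
  refine ⟨-y, ⟨lt_neg_of_lt_neg hy.2, neg_lt_of_neg_lt hy.1⟩, hgy, fun z hz hmz hgz => ?_,
    -u, hu.neg, ?_⟩
  · exact neg_eq_iff_eq_neg.1 (hy_unique (-z) (by simpa) (neg_le_neg hmz) (by simpa))
  · filter_upwards [hu_ev] with i ⟨hui, hgNu, hu_unique⟩
    refine ⟨⟨lt_neg_of_lt_neg hui.2, neg_lt_of_neg_lt hui.1⟩, hgNu, fun z hz hmz hgNz => ?_⟩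
    exact neg_eq_iff_eq_neg.1 (hu_unique (-z) (by simpa) (neg_le_neg hmz) (by simpa))

end Convergence

theorem convex_level_set_convergence_general
    (a b : ℝ)
    (F : ℝ → ℝ) (FN : ℕ → ℝ → ℝ)
    (hFconv : ConvexOn ℝ (Ioo a b) F)
    (hFNconv : ∀ N, ConvexOn ℝ (Ioo a b) (FN N))
    (hFa : Tendsto F (nhdsWithin a (Ioo a b)) atTop)
    (hFb : Tendsto F (nhdsWithin b (Ioo a b)) atTop)
    (hpt : ∀ x ∈ Ioo a b, Tendsto (fun N => FN N x) atTop (nhds (F x)))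
    (xstar : ℝ) (hxstar : xstar ∈ Ioo a b)
    (c : ℝ) (cN : ℕ → ℝ) (hcN : Tendsto cN atTop (nhds c)) (hc : F xstar < c) :
    ∃ yminus yplus : ℝ,
      yminus ∈ Ioo a xstar ∧ yplus ∈ Ioo xstar b ∧
      F yminus = c ∧ F yplus = c ∧
      (∀ z ∈ Ioo a xstar, F z = c → z = yminus) ∧
      (∀ z ∈ Ioo xstar b, F z = c → z = yplus) ∧
      ∃ u v : ℕ → ℝ,
        Tendsto u atTop (nhds yminus) ∧ Tendsto v atTop (nhds yplus) ∧
        ∀ᶠ N in atTop,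
          u N ∈ Ioo a b ∧ v N ∈ Ioo a b ∧ u N < v N ∧
          FN N (u N) = cN N ∧ FN N (v N) = cN N ∧
          ∀ z ∈ Ioo a b, FN N z = cN N → z = u N ∨ z = v N := by
  obtain ⟨hax, hxb⟩ := hxstar
  rw [nhdsWithin_Ioo_eq_nhdsGT (hax.trans hxb)] at hFa
  rw [nhdsWithin_Ioo_eq_nhdsLT (hax.trans hxb)] at hFb
  obtain ⟨p, hcp, hp⟩ := ((hFa.eventually_gt_atTop c).and (Ioo_mem_nhdsGT hax)).exists
  obtain ⟨q, hcq, hq⟩ := ((hFb.eventually_gt_atTop c).and (Ioo_mem_nhdsLT hxb)).exists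
  obtain ⟨ym, hym, hFym, hym_unique, u, hu, hu_ev⟩ :=
    exists_tendsto_apply_eq_of_lt isOpen_Ioo hFconv hFNconv hpt hcN ⟨hp.1, hp.2.trans hxb⟩
      ⟨hax, hxb⟩ hp.2 hc hcp
  obtain ⟨yp, hyp, hFyp, hyp_unique, v, hv, hv_ev⟩ :=
    exists_tendsto_apply_eq_of_gt isOpen_Ioo hFconv hFNconv hpt hcN ⟨hax.trans hq.1, hq.2⟩
      ⟨hax, hxb⟩ hq.1 hc hcq
  refine ⟨ym, yp, ⟨hp.1.trans hym.1, hym.2⟩, ⟨hyp.1, hyp.2.trans hq.2⟩, hFym, hFyp,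
    fun z hz => hym_unique z ⟨hz.1, hz.2.trans hxb⟩ hz.2.le,
    fun z hz => hyp_unique z ⟨hax.trans hz.1, hz.2⟩ hz.1.le, u, v, hu, hv, ?_⟩
  filter_upwards [hu_ev, hv_ev] with N ⟨hu, hFNu, hu_unique⟩ ⟨hv, hFNv, hv_unique⟩
  refine ⟨⟨hp.1.trans hu.1, hu.2.trans hxb⟩, ⟨hax.trans hv.1, hv.2.trans hq.2⟩, hu.2.trans hv.1,
    hFNu, hFNv, fun z hz hFNz => ?_⟩
  rcases le_total z xstar with hzx | hxz
  exacts [Or.inl (hu_unique z hz hzx hFNz), Or.inr (hv_unique z hz hxz hFNz)]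

/-- Let `F_N` be convex functions on `(a,b)` blowing up at both endpoints,
converging pointwise to such a convex function `F` with unique minimizer `x*`, and let
`c_N → c > F x*`. Then `F = c` has a unique solution `y⁻` left of `x*` and a unique
solution `y⁺` right of `x*`, and for `N` large `F_N = c_N` has exactly two solutions
`u N < v N`, which converge to `y⁻` and `y⁺` respectively. -/
theorem convex_level_set_convergence
    (a b : ℝ) (hab : a < b)
    (F : ℝ → ℝ) (FN : ℕ → ℝ → ℝ)
    (hFconv : ConvexOn ℝ (Ioo a b) F)
    (hFNconv : ∀ N, ConvexOn ℝ (Ioo a b) (FN N))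
    (hFa : Tendsto F (nhdsWithin a (Ioo a b)) atTop)
    (hFb : Tendsto F (nhdsWithin b (Ioo a b)) atTop)
    (hFNa : ∀ N, Tendsto (FN N) (nhdsWithin a (Ioo a b)) atTop)
    (hFNb : ∀ N, Tendsto (FN N) (nhdsWithin b (Ioo a b)) atTop)
    (hpt : ∀ x ∈ Ioo a b, Tendsto (fun N => FN N x) atTop (nhds (F x)))
    (xstar : ℝ) (hxstar : xstar ∈ Ioo a b)
    (hmin : ∀ x ∈ Ioo a b, x ≠ xstar → F xstar < F x)
    (c : ℝ) (cN : ℕ → ℝ) (hcN : Tendsto cN atTop (nhds c)) (hc : F xstar < c) :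
    ∃ yminus yplus : ℝ,
      yminus ∈ Ioo a xstar ∧ yplus ∈ Ioo xstar b ∧
      F yminus = c ∧ F yplus = c ∧
      (∀ z ∈ Ioo a xstar, F z = c → z = yminus) ∧
      (∀ z ∈ Ioo xstar b, F z = c → z = yplus) ∧
      ∃ u v : ℕ → ℝ,
        Tendsto u atTop (nhds yminus) ∧ Tendsto v atTop (nhds yplus) ∧
        ∀ᶠ N in atTop,
          u N ∈ Ioo a b ∧ v N ∈ Ioo a b ∧ u N < v N ∧
          FN N (u N) = cN N ∧ FN N (v N) = cN N ∧
          ∀ z ∈ Ioo a b, FN N z = cN N → z = u N ∨ z = v N :=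
  convex_level_set_convergence_general a b F FN hFconv hFNconv hFa hFb hpt xstar hxstar c cN hcN hc
end

section
/- Let f_N : ℝ₊ → ℝ be step functions at scale 1/m_N (with m_N → ∞), D_N f_N(x) = m_N(f_N(x+1/m_N) − f_N(x)) the discrete derivative, and f ∈ C¹(ℝ₊). If f_N → f and D_N f_N → f' both locally weakly in L², then f_N → f uniformly on compact subsets of ℝ₊. -/
/-!
The discrete derivatives `D_N f_N` converge weakly in `L²(0, c)`, so by the uniform boundedness
principle their `L²` norms are bounded by some `C`. Summing `D_N f_N` over grid cells telescopes,
and Cauchy–Schwarz gives `|f_N y - f_N x| ≤ C √(y - x + 1/m_N)`: the `f_N` are equicontinuous up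
to an error vanishing as `N → ∞`. Comparing `f_N x` and `f x` with their averages over a short
interval `[x, x + δ]`, whose difference tends to `0` by weak convergence, yields pointwise
convergence; on a compact set, asymptotic equicontinuity upgrades it to uniform convergence.
-/

open Filter Set Topology MeasureTheory

theorem exists_abs_setIntegral_le_mul_sqrt_of_tendsto_integral_mul {α : Type*} [MeasurableSpace α]
    {μ : Measure α} (u : ℕ → α → ℝ) (hu : ∀ N, MemLp (u N) 2 μ)
    (hconv : ∀ g : α → ℝ, MemLp g 2 μ →
      ∃ L, Tendsto (fun N => ∫ x, u N x * g x ∂μ) atTop (𝓝 L)) :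
    ∃ C, 0 ≤ C ∧ ∀ N s, MeasurableSet s → μ s ≠ ⊤ →
      |∫ x in s, u N x ∂μ| ≤ C * √(μ.real s) := by
  let T : ℕ → Lp ℝ 2 μ →L[ℝ] ℝ := fun N => innerSL ℝ ((hu N).toLp (u N))
  have hT : ∀ N φ, T N φ = ∫ x, u N x * φ x ∂μ := fun N φ => by
    simp only [T, innerSL_apply_apply, L2.inner_def, RCLike.inner_apply, conj_trivial]
    exact integral_congr_ae (((hu N).coeFn_toLp).mono fun x hx => by simp only [hx, mul_comm])
  obtain ⟨C, hC⟩ := banach_steinhaus (g := T) fun φ => by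
    obtain ⟨L, hL⟩ := hconv φ (Lp.memLp φ)
    obtain ⟨B, hB⟩ := hL.norm.bddAbove_range
    exact ⟨B, fun N => by simpa only [hT] using hB ⟨N, rfl⟩⟩
  refine ⟨max C 0, le_max_right _ _, fun N s hs hμs => ?_⟩
  have hind : T N (indicatorConstLp 2 hs hμs 1) = ∫ x in s, u N x ∂μ := by
    rw [innerSL_apply_apply, real_inner_comm, L2.inner_indicatorConstLp_one]
    exact integral_congr_ae (ae_restrict_of_ae (hu N).coeFn_toLp)
  calc |∫ x in s, u N x ∂μ| = ‖T N (indicatorConstLp 2 hs hμs 1)‖ := by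
        rw [hind, Real.norm_eq_abs]
    _ ≤ ‖T N‖ * ‖indicatorConstLp 2 hs hμs (1 : ℝ)‖ := (T N).le_opNorm _
    _ ≤ max C 0 * √(μ.real s) := by
        rw [norm_indicatorConstLp two_ne_zero ENNReal.ofNat_ne_top, norm_one, one_mul,
          Real.sqrt_eq_rpow, ENNReal.toReal_ofNat, one_div]
        gcongr
        exact (hC N).trans (le_max_left _ _)

def AsymptoticallyEquicontinuousOn {ι X β : Type*} [PseudoMetricSpace X] [PseudoMetricSpace β]
    (F : ι → X → β) (l : Filter ι) (s : Set X) : Prop :=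
  ∀ ε > 0, ∃ δ > 0, ∀ᶠ N in l, ∀ x ∈ s, ∀ y ∈ s, dist x y < δ → dist (F N x) (F N y) < ε

namespace AsymptoticallyEquicontinuousOn

variable {ι X β : Type*} [PseudoMetricSpace X] [PseudoMetricSpace β] {F : ι → X → β}
  {l : Filter ι} {s t : Set X}

theorem mono (hF : AsymptoticallyEquicontinuousOn F l s) (hts : t ⊆ s) :
    AsymptoticallyEquicontinuousOn F l t := fun ε hε =>
  let ⟨δ, hδ, hFδ⟩ := hF ε hε
  ⟨δ, hδ, hFδ.mono fun _ hN x hx y hy => hN x (hts hx) y (hts hy)⟩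

theorem tendstoUniformlyOn [l.NeBot] {g : X → β} (hF : AsymptoticallyEquicontinuousOn F l s)
    (hs : IsCompact s) (hlim : ∀ x ∈ s, Tendsto (F · x) l (𝓝 (g x))) :
    TendstoUniformlyOn F g l s := by
  rw [Metric.tendstoUniformlyOn_iff]
  intro ε hε
  obtain ⟨δ, hδ, hFδ⟩ := hF (ε / 3) (by positivity)
  obtain ⟨t, hts, htfin, hcover⟩ := hs.finite_cover_balls hδ
  have hnet : ∀ᶠ N in l, ∀ y ∈ t, dist (F N y) (g y) < ε / 3 :=
    htfin.eventually_all.2 fun y hy => Metric.tendsto_nhds.1 (hlim y (hts hy)) _ (by positivity)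
  filter_upwards [hFδ, hnet] with N hFN hnetN x hx
  obtain ⟨y, hy, hxy⟩ := mem_iUnion₂.1 (hcover hx)
  have hgxy : dist (g x) (g y) ≤ ε / 3 :=
    le_of_tendsto ((hlim x hx).dist (hlim y (hts hy)))
      (hFδ.mono fun N hN => (hN x hx y (hts hy) hxy).le)
  calc dist (g x) (F N x) ≤ dist (g x) (g y) + dist (g y) (F N y) + dist (F N y) (F N x) :=
        dist_triangle4 _ _ _ _
    _ < ε := by
        linarith [dist_comm (g y) (F N y) ▸ hnetN y hy,
          dist_comm (F N x) (F N y) ▸ hFN x hx y (hts hy) hxy]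

end AsymptoticallyEquicontinuousOn

theorem asymptoticallyEquicontinuousOn_of_abs_sub_le_mul_sqrt {ι : Type*} {F : ι → ℝ → ℝ}
    {l : Filter ι} {s : Set ℝ} {C : ℝ} {r : ι → ℝ} (hr : Tendsto r l (𝓝 0))
    (hF : ∀ N, ∀ x ∈ s, ∀ y ∈ s, x ≤ y → |F N y - F N x| ≤ C * √(y - x + r N)) :
    AsymptoticallyEquicontinuousOn F l s := by
  intro ε hε
  have hsqrt : Tendsto (fun t => C * √t) (𝓝 0) (𝓝 0) := by
    simpa using Continuous.tendsto (f := fun t => C * √t) (by fun_prop) 0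
  obtain ⟨ρ, hρ, hρε⟩ := Metric.eventually_nhds_iff.1 (hsqrt.eventually (gt_mem_nhds hε))
  refine ⟨ρ / 2, half_pos hρ, ?_⟩
  filter_upwards [Metric.tendsto_nhds.1 hr _ (half_pos hρ)] with N hN
  rw [Real.dist_eq, sub_zero, abs_lt] at hN
  have hordered : ∀ x ∈ s, ∀ y ∈ s, x ≤ y → y - x < ρ / 2 → |F N y - F N x| < ε :=
    fun x hx y hy hxy hyx => (hF N x hx y hy hxy).trans_lt <| hρε <| by
      rw [Real.dist_eq, sub_zero, abs_lt]
      constructor <;> linarith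
  intro x hx y hy hxy
  rw [Real.dist_eq, abs_lt] at hxy
  rw [Real.dist_eq]
  rcases le_total x y with h | h
  · rw [abs_sub_comm]; exact hordered x hx y hy h (by linarith)
  · exact hordered y hy x hx h (by linarith)

theorem abs_mul_sub_setIntegral_Icc_le {g : ℝ → ℝ} {x δ c ε : ℝ} (hδ : 0 ≤ δ)
    (hg : IntegrableOn g (Icc x (x + δ))) (hgc : ∀ t ∈ Icc x (x + δ), |g t - c| ≤ ε) :
    |δ * c - ∫ t in Icc x (x + δ), g t| ≤ δ * ε := by
  have hvol : volume.real (Icc x (x + δ)) = δ := by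
    rw [Real.volume_real_Icc_of_le (by linarith)]; ring
  have hfin : volume (Icc x (x + δ)) < ⊤ := measure_Icc_lt_top
  have hc : IntegrableOn (fun _ => c) (Icc x (x + δ)) := integrableOn_const
  have hsub : δ * c - ∫ t in Icc x (x + δ), g t = ∫ t in Icc x (x + δ), (c - g t) := by
    rw [integral_sub hc hg, setIntegral_const, hvol, smul_eq_mul]
  rw [hsub, mul_comm, ← Real.norm_eq_abs]
  refine (norm_setIntegral_le_of_norm_le_const hfin fun t ht => ?_).trans_eq (by rw [hvol])
  rw [Real.norm_eq_abs, abs_sub_comm]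
  exact hgc t ht

theorem tendsto_apply_of_tendsto_setIntegral_Icc {ι : Type*} {F : ι → ℝ → ℝ} {f : ℝ → ℝ}
    {l : Filter ι} {x r : ℝ} (hr : 0 < r) (hF : AsymptoticallyEquicontinuousOn F l (Icc x (x + r)))
    (hf : ContinuousOn f (Icc x (x + r))) (hFint : ∀ N, IntegrableOn (F N) (Icc x (x + r)))
    (hint : ∀ δ ∈ Ioc 0 r, Tendsto (fun N => ∫ t in Icc x (x + δ), F N t) l
      (𝓝 (∫ t in Icc x (x + δ), f t))) :
    Tendsto (fun N => F N x) l (𝓝 (f x)) := by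
  rw [Metric.tendsto_nhds]
  intro ε hε
  have hx : x ∈ Icc x (x + r) := left_mem_Icc.2 (by linarith)
  obtain ⟨δ₁, hδ₁, hFδ⟩ := hF (ε / 4) (by positivity)
  obtain ⟨δ₂, hδ₂, hfδ⟩ := Metric.continuousWithinAt_iff.1 (hf x hx) (ε / 4) (by positivity)
  obtain ⟨δ, hδ, hδr, hδδ⟩ : ∃ δ, 0 < δ ∧ δ ≤ r ∧ δ < min δ₁ δ₂ :=
    ⟨min r (min δ₁ δ₂) / 2, by positivity, by linarith [min_le_left r (min δ₁ δ₂)],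
      by linarith [min_le_right r (min δ₁ δ₂), lt_min hδ₁ hδ₂]⟩
  have hsub : Icc x (x + δ) ⊆ Icc x (x + r) := Icc_subset_Icc le_rfl (by linarith)
  have hclose : ∀ t ∈ Icc x (x + δ), dist t x < δ₁ ∧ dist t x < δ₂ := fun t ht => by
    rw [Real.dist_eq, abs_of_nonneg (by linarith [ht.1])]
    exact lt_min_iff.1 (by linarith [ht.2])
  have hfavg : |δ * f x - ∫ t in Icc x (x + δ), f t| ≤ δ * (ε / 4) :=
    abs_mul_sub_setIntegral_Icc_le hδ.le (hf.integrableOn_Icc.mono_set hsub) fun t ht =>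
      (hfδ (hsub ht) (hclose t ht).2).le
  filter_upwards [hFδ, Metric.tendsto_nhds.1 (hint δ ⟨hδ, hδr⟩) (δ * (ε / 4)) (by positivity)]
    with N hFN hintN
  have hFavg : |δ * F N x - ∫ t in Icc x (x + δ), F N t| ≤ δ * (ε / 4) :=
    abs_mul_sub_setIntegral_Icc_le hδ.le ((hFint N).mono_set hsub) fun t ht =>
      (hFN t (hsub ht) x hx (hclose t ht).1).le
  rw [Real.dist_eq] at hintN ⊢
  have hsplit : δ * |F N x - f x| ≤ δ * (3 * (ε / 4)) := by
    rw [← abs_of_pos hδ, ← abs_mul, abs_of_pos hδ, mul_sub]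
    have h1 := abs_sub_le (δ * F N x) (∫ t in Icc x (x + δ), F N t) (δ * f x)
    have h2 := abs_sub_le (∫ t in Icc x (x + δ), F N t) (∫ t in Icc x (x + δ), f t) (δ * f x)
    rw [abs_sub_comm] at hfavg
    linarith
  have := le_of_mul_le_mul_left hsplit hδ
  linarith

def IsStepFunction (m : ℝ) (F : ℝ → ℝ) : Prop :=
  ∀ i : ℕ, ∀ x ∈ Ico ((i : ℝ) / m) (((i : ℝ) + 1) / m), F x = F ((i : ℝ) / m)

noncomputable def discreteDeriv (m : ℝ) (F : ℝ → ℝ) (x : ℝ) : ℝ := m * (F (x + 1 / m) - F x)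

namespace IsStepFunction

variable {m : ℝ} {F : ℝ → ℝ}

theorem eq_floor (hm : 0 < m) (hF : IsStepFunction m F) {x : ℝ} (hx : 0 ≤ x) :
    F x = F (⌊x * m⌋₊ / m) := by
  refine hF _ x ⟨?_, ?_⟩
  · rw [div_le_iff₀ hm]
    exact Nat.floor_le (by positivity)
  · rw [lt_div_iff₀ hm]
    exact Nat.lt_floor_add_one _

theorem discreteDeriv (hF : IsStepFunction m F) :
    IsStepFunction m (discreteDeriv m F) := by
  intro i x hx
  have hshift : x + 1 / m ∈ Ico (((i + 1 : ℕ) : ℝ) / m) ((((i + 1 : ℕ) : ℝ) + 1) / m) := by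
    push_cast
    simp only [add_div, mem_Ico] at hx ⊢
    constructor <;> linarith [hx.1, hx.2]
  have hnext := hF _ _ hshift
  push_cast at hnext
  simp only [_root_.discreteDeriv, hF i x hx, hnext, add_div]

theorem memLp (hm : 0 < m) (hF : IsStepFunction m F) {a b : ℝ} (ha : 0 ≤ a)
    (p : ENNReal) : MemLp F p (volume.restrict (Icc a b)) := by
  have hmeas : Measurable fun x : ℝ => F (⌊x * m⌋₊ / m) :=
    (measurable_from_nat (f := fun n : ℕ => F (n / m))).comp
      (Nat.measurable_floor.comp (measurable_id.mul_const m))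
  have hae : ∀ᵐ x ∂volume.restrict (Icc a b), F (⌊x * m⌋₊ / m) = F x :=
    ae_restrict_of_forall_mem measurableSet_Icc fun x hx => (hF.eq_floor hm (ha.trans hx.1)).symm
  refine MemLp.of_bound (hmeas.aestronglyMeasurable.congr hae)
    (∑ i ∈ Finset.range (⌊b * m⌋₊ + 1), |F (i / m)|) ?_
  refine ae_restrict_of_forall_mem measurableSet_Icc fun x hx => ?_
  rw [Real.norm_eq_abs, hF.eq_floor hm (ha.trans hx.1)]
  refine Finset.single_le_sum (f := fun i : ℕ => |F (i / m)|) (fun i _ => abs_nonneg _) ?_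
  rw [Finset.mem_range, Nat.lt_succ_iff]
  exact Nat.floor_le_floor (mul_le_mul_of_nonneg_right hx.2 hm.le)

theorem integrableOn_Icc (hm : 0 < m) (hF : IsStepFunction m F) {a b : ℝ} (ha : 0 ≤ a) :
    IntegrableOn F (Icc a b) :=
  memLp_one_iff_integrable.1 (hF.memLp hm ha 1)

theorem setIntegral_Ico (hm : 0 < m) (hF : IsStepFunction m F) (i : ℕ) :
    ∫ x in Ico ((i : ℝ) / m) (((i : ℝ) + 1) / m), F x = F (i / m) / m := by
  rw [setIntegral_congr_fun measurableSet_Ico (hF i), setIntegral_const, measureReal_def,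
    Real.volume_Ico, ← sub_div, add_sub_cancel_left, ENNReal.toReal_ofReal (by positivity),
    smul_eq_mul]
  ring

theorem setIntegral_discreteDeriv_Ico (hm : 0 < m) (hF : IsStepFunction m F) {i j : ℕ}
    (hij : i ≤ j) :
    ∫ x in Ico ((i : ℝ) / m) (j / m), _root_.discreteDeriv m F x = F (j / m) - F (i / m) := by
  induction j, hij using Nat.le_induction with
  | base => simp
  | succ j hij ih =>
    have hint := hF.discreteDeriv.integrableOn_Icc hm (a := i / m) (b := (j + 1) / m)
      (by positivity)
    have hmono : (i : ℝ) / m ≤ j / m := by gcongr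
    push_cast
    rw [← Ico_union_Ico_eq_Ico hmono (by gcongr; linarith),
      setIntegral_union Ico_disjoint_Ico_same measurableSet_Ico
        (hint.mono_set (Ico_subset_Icc_self.trans (Icc_subset_Icc le_rfl (by gcongr; linarith))))
        (hint.mono_set (Ico_subset_Icc_self.trans (Icc_subset_Icc hmono le_rfl))),
      ih, hF.discreteDeriv.setIntegral_Ico hm, _root_.discreteDeriv, add_div]
    field_simp
    ring

theorem abs_sub_le_of_abs_setIntegral_le (hm : 0 < m) (hF : IsStepFunction m F) {C c : ℝ}
    (hC0 : 0 ≤ C) (hC : ∀ s ⊆ Icc 0 c, MeasurableSet s →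
      |∫ x in s, _root_.discreteDeriv m F x| ≤ C * √(volume.real s))
    {x y : ℝ} (hx : 0 ≤ x) (hxy : x ≤ y) (hy : y ≤ c) :
    |F y - F x| ≤ C * √(y - x + 1 / m) := by
  have hij : ⌊x * m⌋₊ ≤ ⌊y * m⌋₊ := Nat.floor_le_floor (by gcongr)
  have hj : (⌊y * m⌋₊ : ℝ) / m ≤ y := by
    rw [div_le_iff₀ hm]
    exact Nat.floor_le (mul_nonneg (hx.trans hxy) hm.le)
  have hi : x - 1 / m ≤ (⌊x * m⌋₊ : ℝ) / m := by
    rw [le_div_iff₀ hm, sub_mul, one_div_mul_cancel hm.ne']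
    linarith [Nat.lt_floor_add_one (x * m)]
  rw [hF.eq_floor hm hx, hF.eq_floor hm (hx.trans hxy),
    ← hF.setIntegral_discreteDeriv_Ico hm hij]
  calc _ ≤ C * √(volume.real (Ico ((⌊x * m⌋₊ : ℝ) / m) (⌊y * m⌋₊ / m))) :=
        hC _ (fun t ht => ⟨le_trans (by positivity) ht.1, ht.2.le.trans (hj.trans hy)⟩)
          measurableSet_Ico
    _ ≤ C * √(y - x + 1 / m) := by
        rw [Real.volume_real_Ico]
        gcongr
        exact max_le (by linarith) (by linarith [one_div_pos.2 hm])

end IsStepFunction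

/-- If `f_N` are step functions at scale `1/m_N` (`m_N → ∞`), `f ∈ C¹`, and
both `f_N → f` and `D_N f_N → f'` locally weakly in `L²` on `ℝ₊` (tested against local
`L²` functions), then `f_N → f` uniformly on compact subsets of `ℝ₊`. -/
theorem step_functions_weak_to_uniform
    (m : ℕ → ℝ) (hm : ∀ N, 0 < m N) (hm' : Tendsto m atTop atTop)
    (fN : ℕ → ℝ → ℝ) (f : ℝ → ℝ) (hf : ContDiff ℝ 1 f)
    (hstep : ∀ N, ∀ i : ℕ, ∀ x ∈ Ico ((i : ℝ) / m N) (((i : ℝ) + 1) / m N),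
      fN N x = fN N ((i : ℝ) / m N))
    (hweak_f : ∀ a b : ℝ, 0 ≤ a → a ≤ b → ∀ g : ℝ → ℝ,
      MemLp g 2 (volume.restrict (Icc a b)) →
      Tendsto (fun N => ∫ x in Icc a b, fN N x * g x) atTop
        (nhds (∫ x in Icc a b, f x * g x)))
    (hweak_D : ∀ a b : ℝ, 0 ≤ a → a ≤ b → ∀ g : ℝ → ℝ,
      MemLp g 2 (volume.restrict (Icc a b)) →
      Tendsto (fun N => ∫ x in Icc a b, (m N * (fN N (x + 1 / m N) - fN N x)) * g x) atTop
        (nhds (∫ x in Icc a b, deriv f x * g x))) :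
    ∀ a b : ℝ, 0 ≤ a → TendstoUniformlyOn (fun N x => fN N x) f atTop (Icc a b) := by
  intro a b ha
  have hF : ∀ N, IsStepFunction (m N) (fN N) := hstep
  set c := max b 0 + 1
  obtain ⟨C, hC0, hC⟩ := exists_abs_setIntegral_le_mul_sqrt_of_tendsto_integral_mul
    (μ := volume.restrict (Icc 0 c)) (fun N => discreteDeriv (m N) (fN N))
    (fun N => (hF N).discreteDeriv.memLp (hm N) le_rfl 2)
    (fun g hg => ⟨_, hweak_D 0 c le_rfl (by positivity) g hg⟩)
  have hD : ∀ N, ∀ s ⊆ Icc 0 c, MeasurableSet s →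
      |∫ x in s, discreteDeriv (m N) (fN N) x| ≤ C * √(volume.real s) := fun N s hsub hs => by
    simpa [Measure.restrict_restrict hs, inter_eq_left.2 hsub, measureReal_restrict_apply hs]
      using hC N s hs (measure_ne_top _ _)
  have hequi : AsymptoticallyEquicontinuousOn fN atTop (Icc 0 c) :=
    asymptoticallyEquicontinuousOn_of_abs_sub_le_mul_sqrt (r := fun N => 1 / m N)
      (tendsto_const_nhds.div_atTop hm')
      fun N x hx y hy hxy =>
        (hF N).abs_sub_le_of_abs_setIntegral_le (hm N) hC0 (hD N) hx.1 hxy hy.2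
  have hpt : ∀ x ∈ Icc 0 b, Tendsto (fun N => fN N x) atTop (𝓝 (f x)) := fun x hx =>
    tendsto_apply_of_tendsto_setIntegral_Icc one_pos
      (hequi.mono (Icc_subset_Icc hx.1 (by linarith [hx.2, le_max_left b 0])))
      hf.continuous.continuousOn (fun N => (hF N).integrableOn_Icc (hm N) hx.1) fun δ hδ => by
        simpa using hweak_f x (x + δ) hx.1 (by linarith [hδ.1]) (fun _ => 1) (memLp_const 1)
  have hunif : TendstoUniformlyOn fN f atTop (Icc 0 b) :=
    (hequi.mono (Icc_subset_Icc le_rfl (by linarith [le_max_left b 0]))).tendstoUniformlyOn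
      isCompact_Icc hpt
  exact hunif.mono (Icc_subset_Icc ha le_rfl)
end
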